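/- arXiv:2008.03347 — 7 statements merged into one kernel-verified Lean document; each statement's English description precedes it below -/
import Mathlib

section
/- Let M ∈ ℝ^{q×q} be symmetric with 0 ⪯ M ⪯ I_q (in the Loewner order) and let Q ∈ ℝ^{q×n} satisfy QᵀQ = I_n. Then det(I_n − QᵀMQ) ≥ ∏_{i=1}^{n} (1 − λ_i(M)), where λ_1(M) ≥ … ≥ λ_q(M) are the eigenvalues of M in nonincreasing order. -/
/-!
Cauchy interlacing via Rayleigh quotients. Let `M` and `B = QᵀMQ` have eigenvalues
`λ₁ ≥ ⋯ ≥ λ_q` and `ν₁ ≥ ⋯ ≥ νₙ`. For each `i`, there is a nonzero `y` orthogonal to the eigenvectors of `B` for `ν_{i+1}, …, νₙ` with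
`Qy` orthogonal to the eigenvectors of `M` for `λ₁, …, λ_{i-1}` (only `n - 1` linear conditions).
As `|Qy| = |y|`, this gives `νᵢ|y|² ≤ yᵀBy = (Qy)ᵀM(Qy) ≤ λᵢ|y|²`. Since `M ⪯ I` forces every
`λⱼ ≤ 1`, the factors satisfy `0 ≤ 1 - λᵢ ≤ 1 - νᵢ`, and `det(I - B) = ∏ᵢ (1 - νᵢ)`.
-/

open Matrix Finset

theorem Matrix.exists_ne_zero_forall_mem_dotProduct_eq_zero {K ι m : Type*} [Field K]
    [Fintype m] (s : Finset ι) (v : ι → m → K) (hs : #s < Fintype.card m) :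
    ∃ y ≠ 0, ∀ j ∈ s, v j ⬝ᵥ y = 0 := by
  let V : Matrix s m K := of fun j => v j
  have hker : LinearMap.ker V.mulVecLin ≠ ⊥ :=
    LinearMap.ker_ne_bot_of_finrank_lt (by simpa using hs)
  obtain ⟨y, hy, hy0⟩ := (Submodule.ne_bot_iff _).mp hker
  exact ⟨y, hy0, fun j hj => congrFun hy ⟨j, hj⟩⟩

theorem Matrix.dotProduct_mulVec_transpose_mul_mul {R m n : Type*} [CommSemiring R] [Fintype m]
    [Fintype n] (A : Matrix n n R) (Q : Matrix n m R) (y : m → R) :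
    y ⬝ᵥ ((Qᵀ * A * Q) *ᵥ y) = (Q *ᵥ y) ⬝ᵥ (A *ᵥ (Q *ᵥ y)) := by
  rw [← mulVec_mulVec, ← mulVec_mulVec, dotProduct_mulVec, vecMul_transpose]

theorem Tuple.exists_perm_antitone_comp {α : Type*} [LinearOrder α] {n : ℕ} (f : Fin n → α) :
    ∃ σ : Equiv.Perm (Fin n), Antitone (f ∘ σ) :=
  ⟨Tuple.sort (OrderDual.toDual ∘ f), monotone_toDual_comp_iff.mp (Tuple.monotone_sort _)⟩

namespace Matrix.IsHermitian

variable {n : Type*} [Fintype n] [DecidableEq n] {A : Matrix n n ℝ} (hA : A.IsHermitian)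

theorem det_one_sub : (1 - A).det = ∏ j, (1 - hA.eigenvalues j) := by
  simpa [Polynomial.eval_prod] using
    (eval_charpoly A 1).symm.trans (congrArg (Polynomial.eval 1) hA.charpoly_eq)

theorem eigenvectorBasis_dotProduct_self (j : n) :
    ⇑(hA.eigenvectorBasis j) ⬝ᵥ ⇑(hA.eigenvectorBasis j) = 1 := by
  have h := real_inner_self_eq_norm_sq (hA.eigenvectorBasis j)
  rw [hA.eigenvectorBasis.orthonormal.1 j, EuclideanSpace.inner_eq_star_dotProduct] at h
  simpa using h

theorem dotProduct_conj_diagonal_mulVec (d : n → ℝ) (x : n → ℝ) :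
    x ⬝ᵥ (((hA.eigenvectorUnitary : Matrix n n ℝ) * diagonal d *
        star (hA.eigenvectorUnitary : Matrix n n ℝ)) *ᵥ x)
      = ∑ j, d j * (⇑(hA.eigenvectorBasis j) ⬝ᵥ x) ^ 2 := by
  rw [star_eq_conjTranspose, conjTranspose_eq_transpose_of_trivial, ← mulVec_mulVec,
    ← mulVec_mulVec, dotProduct_mulVec, ← mulVec_transpose]
  simp only [dotProduct, mulVec_diagonal]
  refine sum_congr rfl fun j _ => ?_
  simp only [mulVec, dotProduct, transpose_apply, eigenvectorUnitary_apply]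
  ring

theorem dotProduct_mulVec_eq_sum (x : n → ℝ) :
    x ⬝ᵥ (A *ᵥ x) = ∑ j, hA.eigenvalues j * (⇑(hA.eigenvectorBasis j) ⬝ᵥ x) ^ 2 := by
  conv_lhs => rw [hA.spectral_theorem]
  simpa using hA.dotProduct_conj_diagonal_mulVec hA.eigenvalues x

theorem dotProduct_self_eq_sum (x : n → ℝ) :
    x ⬝ᵥ x = ∑ j, (⇑(hA.eigenvectorBasis j) ⬝ᵥ x) ^ 2 := by
  simpa using hA.dotProduct_conj_diagonal_mulVec 1 x

theorem dotProduct_mulVec_le_mul_dotProduct_self {c : ℝ} {x : n → ℝ}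
    (hx : ∀ j, c < hA.eigenvalues j → ⇑(hA.eigenvectorBasis j) ⬝ᵥ x = 0) :
    x ⬝ᵥ (A *ᵥ x) ≤ c * (x ⬝ᵥ x) := by
  rw [hA.dotProduct_mulVec_eq_sum, hA.dotProduct_self_eq_sum, mul_sum]
  refine sum_le_sum fun j _ => ?_
  rcases le_or_gt (hA.eigenvalues j) c with hj | hj
  · exact mul_le_mul_of_nonneg_right hj (sq_nonneg _)
  · simp [hx j hj]

theorem mul_dotProduct_self_le_dotProduct_mulVec {c : ℝ} {x : n → ℝ}
    (hx : ∀ j, hA.eigenvalues j < c → ⇑(hA.eigenvectorBasis j) ⬝ᵥ x = 0) :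
    c * (x ⬝ᵥ x) ≤ x ⬝ᵥ (A *ᵥ x) := by
  rw [hA.dotProduct_mulVec_eq_sum, hA.dotProduct_self_eq_sum, mul_sum]
  refine sum_le_sum fun j _ => ?_
  rcases le_or_gt c (hA.eigenvalues j) with hj | hj
  · exact mul_le_mul_of_nonneg_right hj (sq_nonneg _)
  · simp [hx j hj]

theorem eigenvalues_le_one (h : (1 - A).PosSemidef) (j : n) : hA.eigenvalues j ≤ 1 := by
  have hu := h.dotProduct_mulVec_nonneg (hA.eigenvectorBasis j)
  rw [sub_mulVec, one_mulVec, mulVec_eigenvectorBasis, star_trivial, dotProduct_sub,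
    dotProduct_smul, hA.eigenvectorBasis_dotProduct_self, smul_eq_mul, mul_one] at hu
  linarith

theorem eigenvalues_transpose_mul_mul_le {m : Type*} [Fintype m] [DecidableEq m]
    {Q : Matrix n m ℝ} (hQ : Qᵀ * Q = 1) (hB : (Qᵀ * A * Q).IsHermitian) {p r : ℕ}
    (α : Fin p ≃ n) (hα : Antitone (hA.eigenvalues ∘ α))
    (β : Fin r ≃ m) (hβ : Antitone (hB.eigenvalues ∘ β)) (hrp : r ≤ p) (i : Fin r) :
    hB.eigenvalues (β i) ≤ hA.eigenvalues (α (Fin.castLE hrp i)) := by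
  let v : Fin p ⊕ Fin r → m → ℝ :=
    Sum.elim (fun k => Qᵀ *ᵥ ⇑(hA.eigenvectorBasis (α k))) (fun k => ⇑(hB.eigenvectorBasis (β k)))
  let s := (Iio (Fin.castLE hrp i)).disjSum (Ioi i)
  have hs : #s < Fintype.card m := by
    have := i.isLt
    rw [← Fintype.card_congr β, Fintype.card_fin, card_disjSum, Fin.card_Iio, Fin.card_Ioi,
      Fin.val_castLE]
    omega
  obtain ⟨y, hy0, hy⟩ := exists_ne_zero_forall_mem_dotProduct_eq_zero s v hs
  have hupper : (Q *ᵥ y) ⬝ᵥ (A *ᵥ (Q *ᵥ y)) ≤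
      hA.eigenvalues (α (Fin.castLE hrp i)) * ((Q *ᵥ y) ⬝ᵥ (Q *ᵥ y)) := by
    refine hA.dotProduct_mulVec_le_mul_dotProduct_self fun j hj => ?_
    obtain ⟨k, rfl⟩ := α.surjective j
    have hk : k < Fin.castLE hrp i := lt_of_not_ge fun hk => hj.not_ge (hα hk)
    rw [dotProduct_mulVec, ← mulVec_transpose]
    exact hy (.inl k) (inl_mem_disjSum.mpr (mem_Iio.mpr hk))
  have hlower : hB.eigenvalues (β i) * (y ⬝ᵥ y) ≤ y ⬝ᵥ ((Qᵀ * A * Q) *ᵥ y) := by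
    refine hB.mul_dotProduct_self_le_dotProduct_mulVec fun j hj => ?_
    obtain ⟨k, rfl⟩ := β.surjective j
    have hk : i < k := lt_of_not_ge fun hk => hj.not_ge (hβ hk)
    exact hy (.inr k) (inr_mem_disjSum.mpr (mem_Ioi.mpr hk))
  have hnorm : (Q *ᵥ y) ⬝ᵥ (Q *ᵥ y) = y ⬝ᵥ y := by
    simpa [hQ] using (dotProduct_mulVec_transpose_mul_mul 1 Q y).symm
  have hpos : 0 < y ⬝ᵥ y := by simpa using dotProduct_star_self_pos_iff.mpr hy0
  rw [dotProduct_mulVec_transpose_mul_mul] at hlower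
  rw [hnorm] at hupper
  exact le_of_mul_le_mul_right (hlower.trans hupper) hpos

end Matrix.IsHermitian

theorem det_one_sub_conj_ge_prod_general {q n : ℕ} (hnq : n ≤ q)
    (M : Matrix (Fin q) (Fin q) ℝ) (hM : M.IsHermitian)
    (hM1 : ((1 : Matrix (Fin q) (Fin q) ℝ) - M).PosSemidef)
    (Q : Matrix (Fin q) (Fin n) ℝ) (hQ : Qᵀ * Q = 1)
    (μ : Fin q → ℝ) (hμanti : Antitone μ)
    (hμ : ∃ e : Equiv.Perm (Fin q), μ = hM.eigenvalues ∘ e) :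
    ∏ i : Fin n, (1 - μ (Fin.castLE hnq i)) ≤ ((1 : Matrix (Fin n) (Fin n) ℝ) - Qᵀ * M * Q).det := by
  obtain ⟨e, rfl⟩ := hμ
  have hB : (Qᵀ * M * Q).IsHermitian := by
    simpa using isHermitian_conjTranspose_mul_mul Q hM
  obtain ⟨σ, hσ⟩ := Tuple.exists_perm_antitone_comp hB.eigenvalues
  rw [hB.det_one_sub, ← Equiv.prod_comp σ fun k => 1 - hB.eigenvalues k]
  refine prod_le_prod (fun i _ => sub_nonneg.mpr (hM.eigenvalues_le_one hM1 _)) fun i _ => ?_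
  exact sub_le_sub_left (hM.eigenvalues_transpose_mul_mul_le hQ hB e hμanti σ hσ hnq i) 1

/-- Let `M ∈ ℝ^{q×q}` be symmetric with `0 ⪯ M ⪯ I_q` (Loewner order) and let
`Q ∈ ℝ^{q×n}` satisfy `QᵀQ = I_n`.  Then
`det(I_n − QᵀMQ) ≥ ∏_{i=1}^{n} (1 − λ_i(M))`,
where `μ` lists the eigenvalues of `M` (with multiplicity) in nonincreasing order. -/
theorem det_one_sub_conj_ge_prod {q n : ℕ} (hnq : n ≤ q)
    (M : Matrix (Fin q) (Fin q) ℝ) (hM : M.IsHermitian)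
    (hM0 : M.PosSemidef) (hM1 : ((1 : Matrix (Fin q) (Fin q) ℝ) - M).PosSemidef)
    (Q : Matrix (Fin q) (Fin n) ℝ) (hQ : Qᵀ * Q = 1)
    (μ : Fin q → ℝ) (hμanti : Antitone μ)
    (hμ : ∃ e : Equiv.Perm (Fin q), μ = hM.eigenvalues ∘ e) :
    ∏ i : Fin n, (1 - μ (Fin.castLE hnq i)) ≤ ((1 : Matrix (Fin n) (Fin n) ℝ) - Qᵀ * M * Q).det :=
  det_one_sub_conj_ge_prod_general hnq M hM hM1 Q hQ μ hμanti hμ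
end

section
/- Let M ∈ ℝ^{q×q} be symmetric with 0 ⪯ M ⪯ I_q and let 1 ≤ n ≤ q. Then the minimum of det(I_n − QᵀMQ) over all Q ∈ ℝ^{q×n} with QᵀQ = I_n is attained and equals ∏_{i=1}^{n} (1 − λ_i(M)), where λ_1(M) ≥ … ≥ λ_q(M) are the eigenvalues of M in nonincreasing order; in particular, when M is diagonal with nonincreasing diagonal entries, the minimum is attained at the matrix Q whose columns are the first n standard basis vectors of ℝ^q. -/
open Matrix

/-- The `q×n` matrix whose columns are the first `n` standard basis vectors of `ℝ^q`. -/
noncomputable def stdCols (q n : ℕ) : Matrix (Fin q) (Fin n) ℝ :=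
  Matrix.of fun i j => if (i : ℕ) = (j : ℕ) then (1 : ℝ) else 0

/-!
Diagonalize `M = U diag(μ) Uᵀ` with `U` orthogonal and `μ` nonincreasing. For `Q` with
orthonormal columns, `A = UᵀQ` again has orthonormal columns and `I − QᵀMQ = Aᵀ diag(1 − μ) A`.
By Cauchy–Binet, `det (Aᵀ diag(c) A)` is a combination of the products `∏_{k ∈ S} c k` over the
`n`-subsets `S` of rows, with nonnegative weights `det (A_S)²` summing to `det (AᵀA) = 1`. Since
`c = 1 − μ` is nonnegative and nondecreasing, each such product is at least the one over the first
`n` rows, and that value is attained by the first `n` eigenvectors. A diagonal `M` has its diagonal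
entries as eigenvalues, so when they are sorted they coincide with `μ`.
-/

open Finset Equiv
open scoped Nat

theorem Fin.val_le_of_strictMono {n q : ℕ} {g : Fin n → Fin q} (hg : StrictMono g) (i : Fin n) :
    (i : ℕ) ≤ g i := by
  obtain ⟨k, hk⟩ := i
  induction k with
  | zero => exact Nat.zero_le _
  | succ k ih =>
    have hlt : g ⟨k, by omega⟩ < g ⟨k + 1, hk⟩ := hg (Fin.mk_lt_mk.mpr k.lt_succ_self)
    exact Nat.succ_le_of_lt ((ih (by omega)).trans_lt (Fin.lt_def.mp hlt))

theorem prod_castLE_le_prod_of_injective {n q : ℕ} (h : n ≤ q) {c : Fin q → ℝ} (hc0 : 0 ≤ c)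
    (hc : Monotone c) {p : Fin n → Fin q} (hp : Function.Injective p) :
    ∏ i, c (Fin.castLE h i) ≤ ∏ i, c (p i) := by
  set σ := Tuple.sort p
  have hsorted : StrictMono (p ∘ σ) :=
    (Tuple.monotone_sort p).strictMono_of_injective (hp.comp σ.injective)
  rw [← Equiv.prod_comp σ (fun i => c (p i))]
  exact Finset.prod_le_prod (fun i _ => hc0 _)
    fun i _ => hc (Fin.le_def.mpr (Fin.val_le_of_strictMono hsorted i))

theorem Antitone.eq_of_map_univ_val_eq {α : Type*} [PartialOrder α] {n : ℕ} {f g : Fin n → α}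
    (hf : Antitone f) (hg : Antitone g)
    (h : Multiset.map f univ.val = Multiset.map g univ.val) : f = g := by
  rw [Fin.univ_val_map, Fin.univ_val_map, Multiset.coe_eq_coe] at h
  exact List.ofFn_injective (h.eq_of_pairwise' hf.sortedGE_ofFn.pairwise hg.sortedGE_ofFn.pairwise)

namespace Matrix

theorem transpose_submatrix_mul_mul_submatrix {l m n α : Type*} [Fintype m] [Fintype n]
    [CommSemiring α] (A : Matrix m n α) (X : Matrix m m α) (f : l → n) :
    (A.submatrix id f)ᵀ * X * A.submatrix id f = (Aᵀ * X * A).submatrix f f := by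
  ext i j
  simp [mul_apply, Finset.sum_mul]

section CommRing

variable {m n R : Type*} [Fintype m] [Fintype n] [DecidableEq n] [CommRing R]

theorem det_transpose_mul_eq_sum (B A : Matrix m n R) :
    det (Bᵀ * A) = ∑ p : n → m, (∏ i, B (p i) i) * det (A.submatrix p id) := by
  have hrows : Bᵀ * A = of fun i => ∑ k, B k i • A k := by
    ext i j
    simp [mul_apply]
  have hdet : det (Bᵀ * A) = (detRowAlternating : (n → R) [⋀^n]→ₗ[R] R).toMultilinearMap
      (fun i => ∑ k, B k i • A k) := by
    rw [hrows]; rfl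
  rw [hdet, MultilinearMap.map_sum]
  simp only [MultilinearMap.map_smul_univ]
  rfl

/- Cauchy–Binet with the `n`-subsets of rows replaced by all maps `p : n → m`: a noninjective `p`
contributes zero, and each subset is counted once for each of its `n!` orderings. -/
theorem factorial_mul_det_transpose_mul (B A : Matrix m n R) :
    ((Fintype.card n)! : R) * det (Bᵀ * A) =
      ∑ p : n → m, det (B.submatrix p id) * det (A.submatrix p id) := by
  have hperm (σ : Perm n) (p : n → m) :
      det (A.submatrix (p ∘ σ) id) = Perm.sign σ * det (A.submatrix p id) :=
    det_permute σ (A.submatrix p id)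
  calc ((Fintype.card n)! : R) * det (Bᵀ * A)
      = ∑ _σ : Perm n, det (Bᵀ * A) := by
        rw [sum_const, Finset.card_univ, Fintype.card_perm, nsmul_eq_mul]
    _ = ∑ σ : Perm n, ∑ p : n → m,
          (∏ i, B (p (σ i)) i) * det (A.submatrix (p ∘ σ) id) := by
        refine Finset.sum_congr rfl fun σ _ => ?_
        rw [det_transpose_mul_eq_sum]
        exact (Equiv.sum_comp (σ.symm.arrowCongr (Equiv.refl m)) _).symm
    _ = ∑ p : n → m, det (B.submatrix p id) * det (A.submatrix p id) := by
        rw [Finset.sum_comm]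
        refine Finset.sum_congr rfl fun p _ => ?_
        simp_rw [hperm, det_apply, Finset.sum_mul]
        refine Finset.sum_congr rfl fun σ _ => ?_
        simp [Units.smul_def]
        ring

variable [DecidableEq m]

theorem factorial_mul_det_transpose_mul_diagonal_mul (A : Matrix m n R) (c : m → R) :
    ((Fintype.card n)! : R) * det (Aᵀ * diagonal c * A) =
      ∑ p : n → m, (∏ i, c (p i)) * det (A.submatrix p id) ^ 2 := by
  rw [← transpose_transpose (diagonal c), ← transpose_mul, diagonal_transpose,
    factorial_mul_det_transpose_mul]
  refine Finset.sum_congr rfl fun p _ => ?_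
  have hrows : (diagonal c * A).submatrix p id = of fun i j => c (p i) * A.submatrix p id i j := by
    ext i j
    simp
  rw [hrows, det_mul_column, sq, mul_assoc]

theorem det_one_sub_conj_submatrix_of_conj_eq_diagonal {U M : Matrix m m R} {d : m → R}
    (hU : Uᵀ * U = 1) (hd : Uᵀ * M * U = diagonal d) {f : n → m} (hf : Function.Injective f) :
    (U.submatrix id f)ᵀ * U.submatrix id f = 1 ∧
      det (1 - (U.submatrix id f)ᵀ * M * U.submatrix id f) = ∏ i, (1 - d (f i)) := by
  constructor
  · rw [← Matrix.mul_one (U.submatrix id f)ᵀ, transpose_submatrix_mul_mul_submatrix,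
      Matrix.mul_one, hU, submatrix_one f hf]
  · rw [transpose_submatrix_mul_mul_submatrix, hd, submatrix_diagonal d f hf, ← diagonal_one,
      diagonal_sub, det_diagonal]
    rfl

end CommRing

theorem prod_castLE_mul_det_le_det_transpose_mul_diagonal_mul {n q : ℕ} (h : n ≤ q)
    {c : Fin q → ℝ} (hc0 : 0 ≤ c) (hc : Monotone c) (A : Matrix (Fin q) (Fin n) ℝ) :
    (∏ i, c (Fin.castLE h i)) * det (Aᵀ * A) ≤ det (Aᵀ * diagonal c * A) := by
  have hfact : (0 : ℝ) < (Fintype.card (Fin n))! := by positivity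
  refine le_of_mul_le_mul_left ?_ hfact
  calc ((Fintype.card (Fin n))! : ℝ) * ((∏ i, c (Fin.castLE h i)) * det (Aᵀ * A))
      = ∑ p : Fin n → Fin q, (∏ i, c (Fin.castLE h i)) * det (A.submatrix p id) ^ 2 := by
        have hA : Aᵀ * A = Aᵀ * (diagonal fun _ => 1 : Matrix (Fin q) (Fin q) ℝ) * A := by
          rw [diagonal_one, Matrix.mul_one]
        rw [hA, mul_left_comm, factorial_mul_det_transpose_mul_diagonal_mul, Finset.mul_sum]
        simp
    _ ≤ ∑ p : Fin n → Fin q, (∏ i, c (p i)) * det (A.submatrix p id) ^ 2 := by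
        refine Finset.sum_le_sum fun p _ => ?_
        by_cases hp : Function.Injective p
        · exact mul_le_mul_of_nonneg_right (prod_castLE_le_prod_of_injective h hc0 hc hp)
            (sq_nonneg _)
        · obtain ⟨i, j, hpij, hij⟩ := Function.not_injective_iff.mp hp
          rw [det_zero_of_row_eq hij (by ext; simp [hpij])]
          simp
    _ = ((Fintype.card (Fin n))! : ℝ) * det (Aᵀ * diagonal c * A) :=
        (factorial_mul_det_transpose_mul_diagonal_mul A c).symm

theorem prod_one_sub_castLE_le_det_one_sub_conj {n q : ℕ} (h : n ≤ q)
    {U M : Matrix (Fin q) (Fin q) ℝ} {μ : Fin q → ℝ} (hU : U * Uᵀ = 1)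
    (hUMU : Uᵀ * M * U = diagonal μ) (hμ1 : μ ≤ 1) (hμ : Antitone μ)
    {Q : Matrix (Fin q) (Fin n) ℝ} (hQ : Qᵀ * Q = 1) :
    ∏ i, (1 - μ (Fin.castLE h i)) ≤ det (1 - Qᵀ * M * Q) := by
  set A := Uᵀ * Q
  have hA : Aᵀ * A = 1 := by
    rw [transpose_mul, transpose_transpose, Matrix.mul_assoc, ← Matrix.mul_assoc U, hU,
      Matrix.one_mul, hQ]
  have hM : M = U * diagonal μ * Uᵀ := by
    rw [← hUMU, ← Matrix.mul_assoc, ← Matrix.mul_assoc, hU, Matrix.one_mul, Matrix.mul_assoc, hU,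
      Matrix.mul_one]
  have hconj : 1 - Qᵀ * M * Q = Aᵀ * diagonal (1 - μ) * A := by
    have hsub : diagonal (1 - μ) = 1 - diagonal μ := by rw [← diagonal_one, diagonal_sub]; rfl
    rw [hsub, Matrix.mul_sub, Matrix.sub_mul, Matrix.mul_one, hA, hM]
    simp only [A, transpose_mul, transpose_transpose, Matrix.mul_assoc]
  have hbound := prod_castLE_mul_det_le_det_transpose_mul_diagonal_mul h (sub_nonneg.mpr hμ1)
    (fun i j hij => sub_le_sub_left (hμ hij) 1) A
  rwa [hA, det_one, mul_one, ← hconj] at hbound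

namespace IsHermitian

variable {n : Type*} [Fintype n] [DecidableEq n] {M : Matrix n n ℝ}

theorem exists_conj_eq_diagonal_eigenvalues_comp (hM : M.IsHermitian) (e : Perm n) :
    ∃ U : Matrix n n ℝ, Uᵀ * U = 1 ∧ U * Uᵀ = 1 ∧ Uᵀ * M * U = diagonal (hM.eigenvalues ∘ e) := by
  set W : Matrix n n ℝ := ↑hM.eigenvectorUnitary
  have hstar : star W = Wᵀ := by
    rw [star_eq_conjTranspose, conjTranspose_eq_transpose_of_trivial]
  have hWW : Wᵀ * W = 1 := hstar ▸ mem_unitaryGroup_iff'.mp hM.eigenvectorUnitary.2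
  have hWW' : W * Wᵀ = 1 := hstar ▸ mem_unitaryGroup_iff.mp hM.eigenvectorUnitary.2
  have hdiag : Wᵀ * M * W = diagonal hM.eigenvalues := by
    rw [← hstar]
    simpa using hM.conjStarAlgAut_star_eigenvectorUnitary
  refine ⟨W.submatrix id e, ?_, ?_, ?_⟩
  · rw [transpose_submatrix, ← submatrix_mul _ _ _ _ _ Function.bijective_id, hWW,
      submatrix_one_equiv]
  · rw [transpose_submatrix, submatrix_mul_equiv, hWW', submatrix_id_id]
  · rw [transpose_submatrix_mul_mul_submatrix, hdiag, submatrix_diagonal_equiv]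

open Polynomial in
theorem map_eigenvalues_eq_map_diag (hM : M.IsHermitian) (hdiag : M.IsDiag) :
    Multiset.map hM.eigenvalues univ.val = Multiset.map M.diag univ.val := by
  have hchar : M.charpoly = ∏ i, (X - C (M.diag i)) := by
    conv_lhs => rw [← hdiag.diagonal_diag]
    exact charpoly_diagonal _
  have hprod : ∏ i, (X - C (M.diag i)) = ((univ.val.map M.diag).map fun a => X - C a).prod := by
    rw [Multiset.map_map]
    rfl
  have hroots := hM.roots_charpoly_eq_eigenvalues
  rw [hchar, hprod, roots_multiset_prod_X_sub_C] at hroots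
  simpa using hroots.symm

end IsHermitian

theorem IsHermitian.diag_eq_of_isDiag {q : ℕ} {M : Matrix (Fin q) (Fin q) ℝ} (hM : M.IsHermitian)
    (hdiag : M.IsDiag) (hM_anti : Antitone M.diag) {μ : Fin q → ℝ} (hμ : Antitone μ)
    {e : Perm (Fin q)} (he : μ = hM.eigenvalues ∘ e) : M.diag = μ := by
  refine hM_anti.eq_of_map_univ_val_eq hμ ?_
  rw [he, ← Multiset.map_map, Multiset.map_univ_val_equiv, hM.map_eigenvalues_eq_map_diag hdiag]

end Matrix

theorem stdCols_eq_submatrix_one {q n : ℕ} (h : n ≤ q) :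
    stdCols q n = (1 : Matrix (Fin q) (Fin q) ℝ).submatrix id (Fin.castLE h) := by
  ext i j
  simp [stdCols, one_apply, Fin.ext_iff]

theorem det_one_sub_conj_min_general {q n : ℕ} (hnq : n ≤ q)
    (M : Matrix (Fin q) (Fin q) ℝ) (hM : M.IsHermitian)
    (hM1 : ((1 : Matrix (Fin q) (Fin q) ℝ) - M).PosSemidef)
    (μ : Fin q → ℝ) (hμanti : Antitone μ)
    (hμ : ∃ e : Equiv.Perm (Fin q), μ = hM.eigenvalues ∘ e) :
    (∀ Q : Matrix (Fin q) (Fin n) ℝ, Qᵀ * Q = 1 →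
        ∏ i : Fin n, (1 - μ (Fin.castLE hnq i))
          ≤ ((1 : Matrix (Fin n) (Fin n) ℝ) - Qᵀ * M * Q).det) ∧
    (∃ Q : Matrix (Fin q) (Fin n) ℝ, Qᵀ * Q = 1 ∧
        ((1 : Matrix (Fin n) (Fin n) ℝ) - Qᵀ * M * Q).det
          = ∏ i : Fin n, (1 - μ (Fin.castLE hnq i))) ∧
    (((∀ i j : Fin q, i ≠ j → M i j = 0) ∧ Antitone fun i : Fin q => M i i) →
        (stdCols q n)ᵀ * stdCols q n = 1 ∧
        ((1 : Matrix (Fin n) (Fin n) ℝ) - (stdCols q n)ᵀ * M * stdCols q n).det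
          = ∏ i : Fin n, (1 - μ (Fin.castLE hnq i))) := by
  obtain ⟨e, he⟩ := hμ
  obtain ⟨U, hUU, hUU', hUMU⟩ := hM.exists_conj_eq_diagonal_eigenvalues_comp e
  rw [← he] at hUMU
  have hμ1 : μ ≤ 1 := by
    have h := hM1.conjTranspose_mul_mul_same U
    rw [conjTranspose_eq_transpose_of_trivial, Matrix.mul_sub, Matrix.sub_mul, Matrix.mul_one,
      hUU, hUMU, ← diagonal_one, diagonal_sub, posSemidef_diagonal_iff] at h
    exact fun i => sub_nonneg.mp (h i)
  refine ⟨fun Q hQ => prod_one_sub_castLE_le_det_one_sub_conj hnq hUU' hUMU hμ1 hμanti hQ,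
    ⟨_, det_one_sub_conj_submatrix_of_conj_eq_diagonal hUU hUMU (Fin.castLE_injective hnq)⟩,
    fun ⟨hoff, hM_anti⟩ => ?_⟩
  have hMd : (1 : Matrix (Fin q) (Fin q) ℝ)ᵀ * M * 1 = diagonal μ := by
    rw [transpose_one, Matrix.one_mul, Matrix.mul_one,
      ← hM.diag_eq_of_isDiag hoff hM_anti hμanti he]
    exact (IsDiag.diagonal_diag hoff).symm
  rw [stdCols_eq_submatrix_one hnq]
  exact det_one_sub_conj_submatrix_of_conj_eq_diagonal (by simp) hMd (Fin.castLE_injective hnq)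

/-- Let `M ∈ ℝ^{q×q}` be symmetric with `0 ⪯ M ⪯ I_q` and `1 ≤ n ≤ q`.  Then the
minimum of `det(I_n − QᵀMQ)` over all `Q ∈ ℝ^{q×n}` with `QᵀQ = I_n` is attained and
equals `∏_{i=1}^{n} (1 − λ_i(M))`, where `μ` lists the eigenvalues of `M` in
nonincreasing order; in particular, when `M` is diagonal with nonincreasing diagonal
entries, the minimum is attained at the matrix whose columns are the first `n`
standard basis vectors of `ℝ^q`. -/
theorem det_one_sub_conj_min {q n : ℕ} (hn1 : 1 ≤ n) (hnq : n ≤ q)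
    (M : Matrix (Fin q) (Fin q) ℝ) (hM : M.IsHermitian)
    (hM0 : M.PosSemidef) (hM1 : ((1 : Matrix (Fin q) (Fin q) ℝ) - M).PosSemidef)
    (μ : Fin q → ℝ) (hμanti : Antitone μ)
    (hμ : ∃ e : Equiv.Perm (Fin q), μ = hM.eigenvalues ∘ e) :
    (∀ Q : Matrix (Fin q) (Fin n) ℝ, Qᵀ * Q = 1 →
        ∏ i : Fin n, (1 - μ (Fin.castLE hnq i))
          ≤ ((1 : Matrix (Fin n) (Fin n) ℝ) - Qᵀ * M * Q).det) ∧
    (∃ Q : Matrix (Fin q) (Fin n) ℝ, Qᵀ * Q = 1 ∧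
        ((1 : Matrix (Fin n) (Fin n) ℝ) - Qᵀ * M * Q).det
          = ∏ i : Fin n, (1 - μ (Fin.castLE hnq i))) ∧
    (((∀ i j : Fin q, i ≠ j → M i j = 0) ∧ Antitone fun i : Fin q => M i i) →
        (stdCols q n)ᵀ * stdCols q n = 1 ∧
        ((1 : Matrix (Fin n) (Fin n) ℝ) - (stdCols q n)ᵀ * M * stdCols q n).det
          = ∏ i : Fin n, (1 - μ (Fin.castLE hnq i))) :=
  det_one_sub_conj_min_general hnq M hM hM1 μ hμanti hμ
end

section
/- Gaussian covariance maximum-likelihood step: Let E ∈ ℝ^{m×m} be symmetric positive definite and let N > 0 be a real number. Then the function Σ ↦ N·log det(Σ) + tr(Σ⁻¹E), defined on symmetric positive definite matrices Σ ∈ ℝ^{m×m}, attains its unique minimum at Σ = E/N, and the minimum value is N·log det(E/N) + m·N. -/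
/-!
With `C = E/N` the objective is `N (log det S + tr (S⁻¹ C))`. Write `C = T²` with `T` Hermitian
and invertible; then `M = T S⁻¹ T` is positive definite with `tr M = tr (S⁻¹ C)` and
`det M = det C / det S`, so the objective exceeds its value `N (log det C + m)` at `S = C` by
`N ∑ (λ - 1 - log λ)` over the eigenvalues `λ` of `M`. Every term is nonnegative because
`log λ ≤ λ - 1`, and the sum vanishes only if all `λ = 1`, i.e. `M = 1`, i.e. `S = C`.
-/

open Matrix

namespace Matrix

variable {n : Type*} [Fintype n] [DecidableEq n]

theorem IsHermitian.eq_one_of_eigenvalues_eq_one {𝕜 : Type*} [RCLike 𝕜] {A : Matrix n n 𝕜}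
    (hA : A.IsHermitian) (h : ∀ i, hA.eigenvalues i = 1) : A = 1 := by
  refine CFC.eq_one_of_spectrum_subset_one (R := ℝ) A ?_ hA.isSelfAdjoint
  rw [hA.spectrum_real_eq_range_eigenvalues]
  rintro _ ⟨i, rfl⟩
  exact h i

namespace PosDef

open scoped MatrixOrder ComplexOrder in
theorem exists_isHermitian_isUnit_mul_self_eq {𝕜 : Type*} [RCLike 𝕜] {C : Matrix n n 𝕜}
    (hC : C.PosDef) : ∃ T : Matrix n n 𝕜, T.IsHermitian ∧ IsUnit T ∧ T * T = C :=
  ⟨CFC.sqrt C, (CFC.sqrt_nonneg C).posSemidef.isHermitian,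
    (CFC.isUnit_sqrt_iff C hC.posSemidef.nonneg).mpr hC.isUnit,
    CFC.sqrt_mul_sqrt_self C hC.posSemidef.nonneg⟩

theorem trace_sub_card_sub_log_det {B : Matrix n n ℝ} (hB : B.PosDef) :
    B.trace - Fintype.card n - Real.log B.det =
      ∑ i, (hB.1.eigenvalues i - 1 - Real.log (hB.1.eigenvalues i)) := by
  simp only [hB.1.trace_eq_sum_eigenvalues, hB.1.det_eq_prod_eigenvalues,
    RCLike.ofReal_real_eq_id, id, Real.log_prod fun i _ ↦ (hB.eigenvalues_pos i).ne',
    Finset.sum_sub_distrib, Finset.sum_const, Finset.card_univ, nsmul_one]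

theorem log_det_le_trace_sub_card {B : Matrix n n ℝ} (hB : B.PosDef) :
    Real.log B.det ≤ B.trace - Fintype.card n := by
  have hsum : 0 ≤ ∑ i, (hB.1.eigenvalues i - 1 - Real.log (hB.1.eigenvalues i)) :=
    Finset.sum_nonneg fun i _ ↦ by
      linarith [Real.log_le_sub_one_of_pos (hB.eigenvalues_pos i)]
  linarith [hB.trace_sub_card_sub_log_det]

theorem log_det_lt_trace_sub_card {B : Matrix n n ℝ} (hB : B.PosDef) (hB1 : B ≠ 1) :
    Real.log B.det < B.trace - Fintype.card n := by
  obtain ⟨i, hi⟩ : ∃ i, hB.1.eigenvalues i ≠ 1 := by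
    by_contra! h
    exact hB1 (hB.1.eq_one_of_eigenvalues_eq_one h)
  have hsum : 0 < ∑ i, (hB.1.eigenvalues i - 1 - Real.log (hB.1.eigenvalues i)) :=
    Finset.sum_pos' (fun j _ ↦ by linarith [Real.log_le_sub_one_of_pos (hB.eigenvalues_pos j)])
      ⟨i, Finset.mem_univ i, by linarith [Real.log_lt_sub_one_of_pos (hB.eigenvalues_pos i) hi]⟩
  linarith [hB.trace_sub_card_sub_log_det]

/-- The witness is `M = T * S⁻¹ * T` where `T * T = C`. -/
theorem exists_posDef_log_det_add_trace_inv_mul_eq {C S : Matrix n n ℝ} (hC : C.PosDef)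
    (hS : S.PosDef) : ∃ M : Matrix n n ℝ, M.PosDef ∧ (M = 1 → S = C) ∧
      Real.log S.det + (S⁻¹ * C).trace = Real.log C.det + M.trace - Real.log M.det := by
  obtain ⟨T, hT, hTunit, rfl⟩ := hC.exists_isHermitian_isUnit_mul_self_eq
  have hM : (T * S⁻¹ * T).PosDef := by
    simpa only [star_eq_conjTranspose, hT.eq] using
      (IsUnit.posDef_star_right_conjugate_iff hTunit).mpr hS.inv
  refine ⟨T * S⁻¹ * T, hM, fun h ↦ ?_, ?_⟩
  · have hTdet : IsUnit T.det := (isUnit_iff_isUnit_det T).mp hTunit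
    have hTinv : T⁻¹ = T * S⁻¹ := inv_eq_left_inv h
    refine inv_inj ?_ ((isUnit_iff_isUnit_det S).mp hS.isUnit)
    calc S⁻¹ = T⁻¹ * (T * S⁻¹) := (nonsing_inv_mul_cancel_left _ _ hTdet).symm
      _ = (T * T)⁻¹ := by rw [← hTinv, mul_inv_rev]
  · have hdet : (T * T).det = S.det * (T * S⁻¹ * T).det := by
      rw [det_mul, det_mul, det_mul, det_nonsing_inv, Ring.inverse_eq_inv']
      field_simp [hS.det_pos.ne']
    have htr : (S⁻¹ * (T * T)).trace = (T * S⁻¹ * T).trace := by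
      rw [← mul_assoc, trace_mul_cycle]
    rw [hdet, Real.log_mul hS.det_pos.ne' hM.det_pos.ne', htr]
    ring

theorem log_det_add_card_le_log_det_add_trace_inv_mul {C S : Matrix n n ℝ} (hC : C.PosDef)
    (hS : S.PosDef) : Real.log C.det + Fintype.card n ≤ Real.log S.det + (S⁻¹ * C).trace := by
  obtain ⟨M, hM, -, heq⟩ := hC.exists_posDef_log_det_add_trace_inv_mul_eq hS
  linarith [hM.log_det_le_trace_sub_card]

theorem log_det_add_card_lt_log_det_add_trace_inv_mul {C S : Matrix n n ℝ} (hC : C.PosDef)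
    (hS : S.PosDef) (hSC : S ≠ C) :
    Real.log C.det + Fintype.card n < Real.log S.det + (S⁻¹ * C).trace := by
  obtain ⟨M, hM, hM1, heq⟩ := hC.exists_posDef_log_det_add_trace_inv_mul_eq hS
  linarith [hM.log_det_lt_trace_sub_card (mt hM1 hSC)]

end PosDef
end Matrix

/-- **Gaussian covariance maximum-likelihood step.**
Let `E ∈ ℝ^{m×m}` be symmetric positive definite and `N > 0` a real number.  Then
`Σ ↦ N·log det(Σ) + tr(Σ⁻¹E)`, defined on symmetric positive definite `Σ`, attains
its unique minimum at `Σ = E/N = N⁻¹ • E`, and the minimum value is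
`N·log det(E/N) + m·N`. -/
theorem gaussian_covariance_ml_step {m : ℕ}
    (E : Matrix (Fin m) (Fin m) ℝ) (hE : E.PosDef) (N : ℝ) (hN : 0 < N) :
    ((N⁻¹ • E : Matrix (Fin m) (Fin m) ℝ)).PosDef ∧
    (N * Real.log (N⁻¹ • E : Matrix (Fin m) (Fin m) ℝ).det
        + ((N⁻¹ • E : Matrix (Fin m) (Fin m) ℝ)⁻¹ * E).trace
      = N * Real.log (N⁻¹ • E : Matrix (Fin m) (Fin m) ℝ).det + m * N) ∧
    ∀ S : Matrix (Fin m) (Fin m) ℝ, S.PosDef →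
      (N * Real.log (N⁻¹ • E : Matrix (Fin m) (Fin m) ℝ).det
          + ((N⁻¹ • E : Matrix (Fin m) (Fin m) ℝ)⁻¹ * E).trace
        ≤ N * Real.log S.det + (S⁻¹ * E).trace) ∧
      (S ≠ N⁻¹ • E →
        N * Real.log (N⁻¹ • E : Matrix (Fin m) (Fin m) ℝ).det
            + ((N⁻¹ • E : Matrix (Fin m) (Fin m) ℝ)⁻¹ * E).trace
          < N * Real.log S.det + (S⁻¹ * E).trace) := by
  set C : Matrix (Fin m) (Fin m) ℝ := N⁻¹ • E
  have hC : C.PosDef := hE.smul (inv_pos.mpr hN)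
  have hEC : E = N • C := by simp [C, smul_smul, hN.ne']
  have hobj (S : Matrix (Fin m) (Fin m) ℝ) :
      N * Real.log S.det + (S⁻¹ * E).trace = N * (Real.log S.det + (S⁻¹ * C).trace) := by
    rw [hEC, Matrix.mul_smul, trace_smul, smul_eq_mul, mul_add]
  have hmin : N * Real.log C.det + (C⁻¹ * E).trace = N * (Real.log C.det + m) := by
    rw [hobj, nonsing_inv_mul _ ((isUnit_iff_isUnit_det C).mp hC.isUnit), trace_one,
      Fintype.card_fin]
  refine ⟨hC, by rw [hmin]; ring, fun S hS ↦ ⟨?_, fun hSC ↦ ?_⟩⟩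
  · rw [hmin, hobj]
    have := hC.log_det_add_card_le_log_det_add_trace_inv_mul hS
    rw [Fintype.card_fin] at this
    exact mul_le_mul_of_nonneg_left this hN.le
  · rw [hmin, hobj]
    have := hC.log_det_add_card_lt_log_det_add_trace_inv_mul hS hSC
    rw [Fintype.card_fin] at this
    exact mul_lt_mul_of_pos_left this hN
end

section
/- Concentrated Gaussian log-likelihood: Let Y ∈ ℝ^{m×N} with columns y_1,…,y_N and Z ∈ ℝ^{q×N} with columns z_1,…,z_N, with ZZᵀ invertible. Set Ĥ = YZᵀ(ZZᵀ)⁻¹ and Σ̂ = (1/N)·(Y − ĤZ)(Y − ĤZ)ᵀ = (1/N)·YYᵀ − (1/N)·Ĥ(ZZᵀ)Ĥᵀ, and assume Σ̂ is positive definite. Then the pair (Ĥ, Σ̂) minimizes the Gaussian negative log-likelihood f over all H ∈ ℝ^{m×q} and symmetric positive definite Σ ∈ ℝ^{m×m}, and the minimum value is f(Ĥ, Σ̂) = (mN/2)(log(2π) + 1) + (N/2)·log det(Σ̂). -/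
/-!
Let `E = Y - ĤZ`. The normal equations `Ĥ(ZZᵀ) = YZᵀ` say `EZᵀ = 0`, so for every `H`,
`(Y - HZ)(Y - HZ)ᵀ = EEᵀ + GGᵀ` with `G = (Ĥ - H)Z`, and `EEᵀ = NΣ̂`. Writing the quadratic
term of `f` as a trace gives
`f(H, Σ) ≥ (mN/2) log 2π + (N/2) (log det Σ + tr(Σ⁻¹Σ̂))`, since `tr(Σ⁻¹GGᵀ) ≥ 0`.
The inequality `log det Σ̂ + m ≤ log det Σ + tr(Σ⁻¹Σ̂)` is `log λ ≤ λ - 1` summed over the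
eigenvalues `λ` of `Σ⁻¹Σ̂`, and equality holds at `(Ĥ, Σ̂)`.
-/

open Matrix

/-- The Gaussian negative log-likelihood
`f(H,Σ) = (mN/2)·log(2π) + (N/2)·log det(Σ) + (1/2)·∑_t (y_t − Hz_t)ᵀ Σ⁻¹ (y_t − Hz_t)`,
where `y_t` (resp. `z_t`) is the `t`-th column of `Y` (resp. `Z`). -/
noncomputable def negLogLik {m q N : ℕ}
    (Y : Matrix (Fin m) (Fin N) ℝ) (Z : Matrix (Fin q) (Fin N) ℝ)
    (H : Matrix (Fin m) (Fin q) ℝ) (S : Matrix (Fin m) (Fin m) ℝ) : ℝ :=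
  ((m : ℝ) * N / 2) * Real.log (2 * Real.pi) + ((N : ℝ) / 2) * Real.log S.det
    + (1 / 2) * ∑ t : Fin N, (Yᵀ t - H *ᵥ Zᵀ t) ⬝ᵥ (S⁻¹ *ᵥ (Yᵀ t - H *ᵥ Zᵀ t))

namespace Matrix

variable {n k : Type*} [Fintype n]

theorem PosSemidef.trace_mul_mul_transpose_nonneg {P : Matrix n n ℝ} (hP : P.PosSemidef)
    [Fintype k] (G : Matrix n k ℝ) : 0 ≤ (P * (G * Gᵀ)).trace := by
  rw [← Matrix.mul_assoc, trace_mul_comm, ← Matrix.mul_assoc]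
  simpa using (hP.conjTranspose_mul_mul_same G).trace_nonneg

variable [DecidableEq n]

theorem PosDef.log_det_add_card_le_trace {M : Matrix n n ℝ} (hM : M.PosDef) :
    Real.log M.det + Fintype.card n ≤ M.trace := by
  have hpos := hM.eigenvalues_pos
  rw [hM.isHermitian.det_eq_prod_eigenvalues, hM.isHermitian.trace_eq_sum_eigenvalues]
  simp only [RCLike.ofReal_real_eq_id, id]
  rw [Real.log_prod fun i _ => (hpos i).ne', Fintype.card_eq_sum_ones, Nat.cast_sum, Nat.cast_one,
    ← Finset.sum_add_distrib]
  exact Finset.sum_le_sum fun i _ => by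
    linarith [Real.log_le_sub_one_of_pos (hpos i)]

/-- Writing `A = Xᴴ X`, the trace of `B⁻¹ A` is that of `X B⁻¹ Xᴴ`, a positive definite matrix
of determinant `det A / det B`. -/
theorem PosDef.log_det_add_card_le_log_det_add_trace_inv_mul_s7 {A B : Matrix n n ℝ}
    (hA : A.PosDef) (hB : B.PosDef) :
    Real.log A.det + Fintype.card n ≤ Real.log B.det + (B⁻¹ * A).trace := by
  open scoped MatrixOrder in
  obtain ⟨X, hX⟩ := CStarAlgebra.nonneg_iff_eq_star_mul_self.mp hA.posSemidef.nonneg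
  rw [star_eq_conjTranspose] at hX
  have hdet : (X * B⁻¹ * Xᴴ).det = A.det / B.det := by
    rw [hX, det_mul, det_mul, det_mul, det_nonsing_inv, Ring.inverse_eq_inv]
    ring
  have hM : (X * B⁻¹ * Xᴴ).PosDef := by
    refine (hB.inv.posSemidef.mul_mul_conjTranspose_same X).posDef_iff_det_ne_zero.mpr ?_
    rw [hdet]
    exact div_ne_zero hA.det_pos.ne' hB.det_pos.ne'
  have htr : (X * B⁻¹ * Xᴴ).trace = (B⁻¹ * A).trace := by
    rw [hX, trace_mul_cycle, trace_mul_comm]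
  have := hM.log_det_add_card_le_trace
  rw [hdet, htr, Real.log_div hA.det_pos.ne' hB.det_pos.ne'] at this
  linarith

variable {R ι m p : Type*} [CommRing R] [Fintype ι] [Fintype p]

theorem residual_mul_transpose_eq_zero [DecidableEq p] (Y : Matrix m ι R) (Z : Matrix p ι R)
    (hZ : IsUnit (Z * Zᵀ)) : (Y - Y * Zᵀ * (Z * Zᵀ)⁻¹ * Z) * Zᵀ = 0 := by
  rw [Matrix.sub_mul, Matrix.mul_assoc _ Z, Matrix.mul_assoc,
    nonsing_inv_mul _ ((isUnit_iff_isUnit_det _).mp hZ), Matrix.mul_one, sub_self]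

theorem sub_mul_mul_transpose_eq_of_orthogonal {Y : Matrix m ι R} {Z : Matrix p ι R}
    {Hhat : Matrix m p R} (hE : (Y - Hhat * Z) * Zᵀ = 0) (H : Matrix m p R) :
    (Y - H * Z) * (Y - H * Z)ᵀ
      = (Y - Hhat * Z) * (Y - Hhat * Z)ᵀ + ((Hhat - H) * Z) * ((Hhat - H) * Z)ᵀ := by
  have hcross : (Y - Hhat * Z) * ((Hhat - H) * Z)ᵀ = 0 := by
    rw [transpose_mul, ← Matrix.mul_assoc, hE, Matrix.zero_mul]
  have hcross' : ((Hhat - H) * Z) * (Y - Hhat * Z)ᵀ = 0 := by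
    rw [← transpose_transpose ((Hhat - H) * Z), ← transpose_mul, hcross, transpose_zero]
  have hsplit : Y - H * Z = (Y - Hhat * Z) + (Hhat - H) * Z := by
    rw [Matrix.sub_mul]; abel
  rw [hsplit, transpose_add, Matrix.add_mul, Matrix.mul_add, Matrix.mul_add, hcross, hcross']
  abel

theorem sub_mul_mul_transpose_eq_sub_of_orthogonal {Y : Matrix m ι R} {Z : Matrix p ι R}
    {Hhat : Matrix m p R} (hE : (Y - Hhat * Z) * Zᵀ = 0) :
    (Y - Hhat * Z) * (Y - Hhat * Z)ᵀ = Y * Yᵀ - Hhat * (Z * Zᵀ) * Hhatᵀ := by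
  have := sub_mul_mul_transpose_eq_of_orthogonal hE 0
  rw [Matrix.zero_mul, sub_zero, sub_zero, transpose_mul, Matrix.mul_assoc, ← Matrix.mul_assoc Z,
    ← Matrix.mul_assoc] at this
  rw [this, add_sub_cancel_right]

theorem sum_dotProduct_mulVec_transpose (A : Matrix m m R) (E : Matrix m ι R) [Fintype m] :
    ∑ t, Eᵀ t ⬝ᵥ (A *ᵥ Eᵀ t) = (A * (E * Eᵀ)).trace := by
  simp only [dotProduct, mulVec, trace, diag_apply, mul_apply, transpose_apply,
    Finset.mul_sum]
  rw [Finset.sum_comm]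
  refine Finset.sum_congr rfl fun i _ => ?_
  rw [Finset.sum_comm]
  exact Finset.sum_congr rfl fun j _ => Finset.sum_congr rfl fun t _ => by ring

end Matrix

theorem negLogLik_eq_trace {m q N : ℕ}
    (Y : Matrix (Fin m) (Fin N) ℝ) (Z : Matrix (Fin q) (Fin N) ℝ)
    (H : Matrix (Fin m) (Fin q) ℝ) (S : Matrix (Fin m) (Fin m) ℝ) :
    negLogLik Y Z H S = ((m : ℝ) * N / 2) * Real.log (2 * Real.pi)
      + ((N : ℝ) / 2) * Real.log S.det + (1 / 2) * (S⁻¹ * ((Y - H * Z) * (Y - H * Z)ᵀ)).trace := by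
  have hcol : ∀ t, Yᵀ t - H *ᵥ Zᵀ t = (Y - H * Z)ᵀ t := fun t => by
    ext i
    simp [mulVec, mul_apply, dotProduct]
  simp only [negLogLik, hcol, sum_dotProduct_mulVec_transpose]

section Residual

variable {m q N : ℕ} {Y : Matrix (Fin m) (Fin N) ℝ} {Z : Matrix (Fin q) (Fin N) ℝ}

/-- With `N = 0` both sides vanish, since `Y` and `Z` have no columns. -/
theorem residual_gram_eq_natCast_smul {Hhat : Matrix (Fin m) (Fin q) ℝ}
    {Shat : Matrix (Fin m) (Fin m) ℝ}
    (hS : Shat = (N : ℝ)⁻¹ • ((Y - Hhat * Z) * (Y - Hhat * Z)ᵀ)) :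
    (Y - Hhat * Z) * (Y - Hhat * Z)ᵀ = (N : ℝ) • Shat := by
  rcases N.eq_zero_or_pos with rfl | hN
  · rw [empty_mul_empty, Nat.cast_zero, zero_smul]
  · rw [hS, smul_smul, mul_inv_cancel₀ (Nat.cast_ne_zero.mpr hN.ne'), one_smul]

theorem negLogLik_of_residual_gram {Hhat : Matrix (Fin m) (Fin q) ℝ}
    {Shat : Matrix (Fin m) (Fin m) ℝ} (hSpd : Shat.PosDef)
    (hgram : (Y - Hhat * Z) * (Y - Hhat * Z)ᵀ = (N : ℝ) • Shat) :
    negLogLik Y Z Hhat Shat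
      = ((m : ℝ) * N / 2) * (Real.log (2 * Real.pi) + 1) + ((N : ℝ) / 2) * Real.log Shat.det := by
  rw [negLogLik_eq_trace, hgram, mul_smul_comm, nonsing_inv_mul _ hSpd.det_pos.ne'.isUnit,
    trace_smul, trace_one, Fintype.card_fin, smul_eq_mul]
  ring

theorem le_negLogLik_of_orthogonal {Hhat : Matrix (Fin m) (Fin q) ℝ}
    {Shat : Matrix (Fin m) (Fin m) ℝ} (hE : (Y - Hhat * Z) * Zᵀ = 0)
    (hgram : (Y - Hhat * Z) * (Y - Hhat * Z)ᵀ = (N : ℝ) • Shat)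
    (H : Matrix (Fin m) (Fin q) ℝ) {S : Matrix (Fin m) (Fin m) ℝ} (hS : S.PosDef) :
    ((m : ℝ) * N / 2) * Real.log (2 * Real.pi)
        + ((N : ℝ) / 2) * (Real.log S.det + (S⁻¹ * Shat).trace) ≤ negLogLik Y Z H S := by
  have hfit := hS.inv.posSemidef.trace_mul_mul_transpose_nonneg ((Hhat - H) * Z)
  rw [negLogLik_eq_trace, sub_mul_mul_transpose_eq_of_orthogonal hE, hgram, Matrix.mul_add,
    trace_add, mul_smul_comm, trace_smul, smul_eq_mul]
  linarith

end Residual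

/-- **Concentrated Gaussian log-likelihood.**
With `ZZᵀ` invertible, `Ĥ = YZᵀ(ZZᵀ)⁻¹` and
`Σ̂ = (1/N)(Y − ĤZ)(Y − ĤZ)ᵀ = (1/N)YYᵀ − (1/N)Ĥ(ZZᵀ)Ĥᵀ` positive definite,
the pair `(Ĥ, Σ̂)` minimizes the Gaussian negative log-likelihood over all `H` and
symmetric positive definite `Σ`, and the minimum value is
`(mN/2)(log(2π)+1) + (N/2)·log det(Σ̂)`. -/
theorem concentrated_gaussian_loglik {m q N : ℕ}
    (Y : Matrix (Fin m) (Fin N) ℝ) (Z : Matrix (Fin q) (Fin N) ℝ)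
    (hZ : IsUnit (Z * Zᵀ))
    (Hhat : Matrix (Fin m) (Fin q) ℝ) (hH : Hhat = Y * Zᵀ * (Z * Zᵀ)⁻¹)
    (Shat : Matrix (Fin m) (Fin m) ℝ)
    (hS : Shat = (N : ℝ)⁻¹ • ((Y - Hhat * Z) * (Y - Hhat * Z)ᵀ))
    (hSpd : Shat.PosDef) :
    Shat = (N : ℝ)⁻¹ • (Y * Yᵀ) - (N : ℝ)⁻¹ • (Hhat * (Z * Zᵀ) * Hhatᵀ) ∧
    (∀ (H : Matrix (Fin m) (Fin q) ℝ) (S : Matrix (Fin m) (Fin m) ℝ), S.PosDef →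
        negLogLik Y Z Hhat Shat ≤ negLogLik Y Z H S) ∧
    negLogLik Y Z Hhat Shat
      = ((m : ℝ) * N / 2) * (Real.log (2 * Real.pi) + 1)
        + ((N : ℝ) / 2) * Real.log Shat.det := by
  have hE : (Y - Hhat * Z) * Zᵀ = 0 := hH ▸ residual_mul_transpose_eq_zero Y Z hZ
  have hgram := residual_gram_eq_natCast_smul hS
  have hmin := negLogLik_of_residual_gram hSpd hgram
  refine ⟨by rw [hS, sub_mul_mul_transpose_eq_sub_of_orthogonal hE, smul_sub], ?_, hmin⟩
  intro H S hSpdS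
  have hlogdet := hSpd.log_det_add_card_le_log_det_add_trace_inv_mul_s7 hSpdS
  rw [Fintype.card_fin] at hlogdet
  calc negLogLik Y Z Hhat Shat
      = ((m : ℝ) * N / 2) * Real.log (2 * Real.pi)
          + ((N : ℝ) / 2) * (Real.log Shat.det + m) := by rw [hmin]; ring
    _ ≤ ((m : ℝ) * N / 2) * Real.log (2 * Real.pi)
          + ((N : ℝ) / 2) * (Real.log S.det + (S⁻¹ * Shat).trace) := by gcongr
    _ ≤ negLogLik Y Z H S := le_negLogLik_of_orthogonal hE hgram H hSpdS
end

section
/- Existence of the constrained (canonical correlation) singular value decomposition: Let P ∈ ℝ^{m×m} and R ∈ ℝ^{q×q} be symmetric positive definite and let C ∈ ℝ^{m×q}. Then there exist invertible matrices Ũ ∈ ℝ^{m×m} and Ṽ ∈ ℝ^{q×q} and a matrix S̃ ∈ ℝ^{m×q} whose off-diagonal entries vanish and whose diagonal entries are nonnegative and nonincreasing, such that ŨᵀPŨ = I_m, ṼᵀRṼ = I_q, and ŨᵀCṼ = S̃. -/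
/-!
Whitening reduces the statement to the ordinary singular value decomposition: if `Lᵀ P L = 1` and
`Mᵀ R M = 1`, an SVD `U₀ᵀ (Lᵀ C M) V₀ = S` with orthogonal `U₀`, `V₀` gives `Ũ = L U₀`, `Ṽ = M V₀`.
The SVD of `A` comes from diagonalising `Aᵀ A` by an orthogonal `V` with eigenvalues in decreasing
order: the columns of `A V` are then pairwise orthogonal with squared norms the eigenvalues, and the
normalised nonzero ones extend to an orthonormal basis of `ℝᵐ`. Since `rank (Aᵀ A) ≤ m`, the nonzero
eigenvalues sit at indices below `m`, so each nonzero column can be placed at the same index.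
-/

open Matrix

theorem Fin.val_lt_of_antitone_of_card_ne_zero_le {α : Type*} [PartialOrder α] [Zero α]
    [DecidableEq α] {q m : ℕ} {μ : Fin q → α} (hμ : Antitone μ) (h0 : 0 ≤ μ)
    (hcard : Fintype.card {j // μ j ≠ 0} ≤ m) {j : Fin q} (hj : μ j ≠ 0) :
    (j : ℕ) < m := by
  have hsub : Finset.Iic j ⊆ Finset.univ.filter (fun j => μ j ≠ 0) := fun i hi => by
    simp only [Finset.mem_filter, Finset.mem_univ, true_and]
    exact (lt_of_lt_of_le (lt_of_le_of_ne (h0 j) (Ne.symm hj)) (hμ (Finset.mem_Iic.mp hi))).ne'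
  have := Finset.card_le_card hsub
  rw [Fin.card_Iic, ← Fintype.card_subtype] at this
  omega

namespace Matrix

def rectDiagonal {α : Type*} [Zero α] {m q : ℕ} (s : Fin q → α) : Matrix (Fin m) (Fin q) α :=
  of fun i j => if (i : ℕ) = j then s j else 0

theorem transpose_mul_mul_mul_mul {l m n : Type*} [Fintype l] [Fintype m] [Fintype n]
    {α : Type*} [CommSemiring α] (X : Matrix l m α) (Y : Matrix m m α) (P : Matrix l n α)
    (Z : Matrix n n α) (W : Matrix n n α) :
    (X * Y)ᵀ * P * (Z * W) = Yᵀ * (Xᵀ * P * Z) * W := by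
  simp only [transpose_mul, Matrix.mul_assoc]

theorem transpose_submatrix_mul_mul_submatrix_s8 {m n : Type*} [Fintype m] {α : Type*}
    [NonUnitalNonAssocSemiring α] (V : Matrix m n α) (B : Matrix m m α) (σ : Equiv.Perm n) :
    (V.submatrix id σ)ᵀ * B * V.submatrix id σ = (Vᵀ * B * V).submatrix σ σ := by
  ext i j
  simp [mul_apply]

section Gram

variable {m n : Type*} [Fintype m] [DecidableEq n] {B : Matrix m n ℝ} {μ : n → ℝ}
  (hB : Bᵀ * B = diagonal μ)
include hB

theorem eq_sum_sq_of_transpose_mul_self_eq_diagonal (j : n) : μ j = ∑ k, B k j ^ 2 := by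
  simpa [mul_apply, sq] using (congrFun₂ hB j j).symm

theorem nonneg_of_transpose_mul_self_eq_diagonal : 0 ≤ μ := fun j => by
  rw [eq_sum_sq_of_transpose_mul_self_eq_diagonal hB j]
  positivity

theorem col_eq_zero_of_transpose_mul_self_eq_diagonal {j : n} (hj : μ j = 0) (k : m) :
    B k j = 0 := by
  rw [eq_sum_sq_of_transpose_mul_self_eq_diagonal hB,
    Finset.sum_eq_zero_iff_of_nonneg fun _ _ => sq_nonneg _] at hj
  exact pow_eq_zero_iff two_ne_zero |>.mp (hj k (Finset.mem_univ k))

theorem card_ne_zero_le_of_transpose_mul_self_eq_diagonal [Fintype n] :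
    Fintype.card {j // μ j ≠ 0} ≤ Fintype.card m := by
  classical
  rw [← rank_diagonal, ← hB]
  exact (rank_mul_le_right _ _).trans (rank_le_card_height B)

end Gram

variable {n : Type*} [Fintype n] [DecidableEq n]

open scoped MatrixOrder in
theorem PosDef.exists_isUnit_transpose_mul_mul_eq_one {P : Matrix n n ℝ} (hP : P.PosDef) :
    ∃ L : Matrix n n ℝ, IsUnit L ∧ Lᵀ * P * L = 1 := by
  set S := CFC.sqrt P
  have hSS : S * S = P := CFC.sqrt_mul_sqrt_self P hP.posSemidef.nonneg
  have hSsymm : Sᵀ = S := (CFC.sqrt_nonneg P).isSelfAdjoint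
  have hS : IsUnit S.det :=
    (isUnit_iff_isUnit_det S).mp (isUnit_of_mul_isUnit_left (hSS ▸ hP.isUnit))
  refine ⟨S⁻¹, isUnit_nonsing_inv_iff.mpr ((isUnit_iff_isUnit_det S).mpr hS), ?_⟩
  rw [transpose_nonsing_inv, hSsymm, ← hSS, ← Matrix.mul_assoc, nonsing_inv_mul _ hS,
    Matrix.one_mul, mul_nonsing_inv _ hS]

theorem IsHermitian.exists_orthogonal_diagonalization {A : Matrix n n ℝ} (hA : A.IsHermitian) :
    ∃ (V : Matrix n n ℝ) (μ : n → ℝ), Vᵀ * V = 1 ∧ Vᵀ * A * V = diagonal μ := by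
  refine ⟨hA.eigenvectorUnitary, hA.eigenvalues, ?_, ?_⟩
  · simpa [star_eq_conjTranspose] using Unitary.coe_star_mul_self hA.eigenvectorUnitary
  · simpa [star_eq_conjTranspose] using hA.conjStarAlgAut_star_eigenvectorUnitary

theorem IsHermitian.exists_orthogonal_diagonalization_antitone {q : ℕ}
    {A : Matrix (Fin q) (Fin q) ℝ} (hA : A.IsHermitian) :
    ∃ (V : Matrix (Fin q) (Fin q) ℝ) (μ : Fin q → ℝ),
      Vᵀ * V = 1 ∧ Antitone μ ∧ Vᵀ * A * V = diagonal μ := by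
  obtain ⟨V, μ, hV, hVA⟩ := hA.exists_orthogonal_diagonalization
  set σ := Tuple.sort (OrderDual.toDual ∘ μ)
  refine ⟨V.submatrix id σ, μ ∘ σ, ?_, monotone_toDual_comp_iff.mp (Tuple.monotone_sort _), ?_⟩
  · simpa [hV] using transpose_submatrix_mul_mul_submatrix_s8 V 1 σ
  · rw [transpose_submatrix_mul_mul_submatrix_s8, hVA, submatrix_diagonal_equiv]

theorem exists_orthogonal_extension {ι : Type*} [Fintype ι] [DecidableEq ι]
    (W : Matrix n ι ℝ) (hW : Wᵀ * W = 1) (e : ι ↪ n) :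
    ∃ U : Matrix n n ℝ, Uᵀ * U = 1 ∧ ∀ k j, U k (e j) = W k j := by
  set col : ι → EuclideanSpace ℝ n := fun j => WithLp.toLp 2 (Wᵀ j)
  have hcol : Orthonormal ℝ col := by
    rw [← gram_eq_one_iff_orthonormal, ← hW]
    ext i j
    simp [col, gram_apply, EuclideanSpace.inner_toLp_toLp, mul_apply, dotProduct, mul_comm]
  set v : n → EuclideanSpace ℝ n := Function.extend e col 0
  have hv_apply (j : ι) : v (e j) = col j := e.injective.extend_apply _ _ _
  have hv : Orthonormal ℝ ((Set.range e).domRestrict v) := by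
    convert hcol.comp _ (Equiv.ofInjective e e.injective).symm.injective
    ext ⟨_, j, rfl⟩ : 1
    simp [hv_apply]
  obtain ⟨b, hb⟩ := hv.exists_orthonormalBasis_extension_of_card_eq (by simp)
  refine ⟨(EuclideanSpace.basisFun n ℝ).toBasis.toMatrix b.toBasis, ?_, fun k j => ?_⟩
  · simpa using (EuclideanSpace.basisFun n ℝ).toMatrix_orthonormalBasis_conjTranspose_mul_self b
  · rw [Module.Basis.toMatrix_apply, OrthonormalBasis.coe_toBasis, hb (e j) ⟨j, rfl⟩, hv_apply]
    simp [col]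

theorem exists_orthogonal_transpose_mul_eq_rectDiagonal {m q : ℕ} {B : Matrix (Fin m) (Fin q) ℝ}
    {μ : Fin q → ℝ} (hμ : Antitone μ) (hB : Bᵀ * B = diagonal μ) :
    ∃ U : Matrix (Fin m) (Fin m) ℝ, Uᵀ * U = 1 ∧ Uᵀ * B = rectDiagonal fun j => √(μ j) := by
  have h0 := nonneg_of_transpose_mul_self_eq_diagonal hB
  have hlt {j : Fin q} (hj : μ j ≠ 0) : (j : ℕ) < m :=
    Fin.val_lt_of_antitone_of_card_ne_zero_le hμ h0
      (by simpa using card_ne_zero_le_of_transpose_mul_self_eq_diagonal hB) hj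
  let e : {j // μ j ≠ 0} ↪ Fin m :=
    ⟨fun j => ⟨j.1, hlt j.2⟩, fun i j h => Subtype.ext (Fin.ext (congrArg Fin.val h :))⟩
  set W : Matrix (Fin m) {j // μ j ≠ 0} ℝ := of fun k j => B k j / √(μ j)
  have hW : Wᵀ * W = 1 := by
    ext i j
    have hij := congrFun₂ hB i j
    simp only [mul_apply, transpose_apply, diagonal_apply] at hij
    simp only [W, mul_apply, transpose_apply, of_apply, div_mul_div_comm, ← Finset.sum_div, hij,
      one_apply, Subtype.ext_iff]
    split_ifs with h
    · rw [h, Real.mul_self_sqrt (h0 j), div_self j.2]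
    · exact zero_div _
  obtain ⟨U, hU, hUW⟩ := exists_orthogonal_extension W hW e
  refine ⟨U, hU, ?_⟩
  ext i j
  by_cases hj : μ j = 0
  · simp [rectDiagonal, mul_apply, col_eq_zero_of_transpose_mul_self_eq_diagonal hB hj, hj]
  · have hcol (k : Fin m) : B k j = √(μ j) * U k (e ⟨j, hj⟩) := by
      have : √(μ j) ≠ 0 := Real.sqrt_ne_zero'.mpr (lt_of_le_of_ne (h0 j) (Ne.symm hj))
      rw [hUW]
      simp only [W, of_apply]
      field_simp
    have he : ((e ⟨j, hj⟩ : Fin m) : ℕ) = j := rfl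
    calc (Uᵀ * B) i j = √(μ j) * (Uᵀ * U) i (e ⟨j, hj⟩) := by
          simp only [mul_apply, transpose_apply, hcol, Finset.mul_sum, mul_left_comm]
      _ = _ := by simp [hU, rectDiagonal, one_apply, Fin.ext_iff, he]

theorem exists_svd {m q : ℕ} (A : Matrix (Fin m) (Fin q) ℝ) :
    ∃ (U : Matrix (Fin m) (Fin m) ℝ) (V : Matrix (Fin q) (Fin q) ℝ) (s : Fin q → ℝ),
      Uᵀ * U = 1 ∧ Vᵀ * V = 1 ∧ 0 ≤ s ∧ Antitone s ∧ Uᵀ * A * V = rectDiagonal s := by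
  have hG : (Aᵀ * A).IsHermitian := by simpa using isHermitian_conjTranspose_mul_self A
  obtain ⟨V, μ, hV, hμ, hAV⟩ := hG.exists_orthogonal_diagonalization_antitone
  have hB : (A * V)ᵀ * (A * V) = diagonal μ := by
    simpa [transpose_mul, Matrix.mul_assoc] using hAV
  obtain ⟨U, hU, hUAV⟩ := exists_orthogonal_transpose_mul_eq_rectDiagonal hμ hB
  exact ⟨U, V, fun j => √(μ j), hU, hV, fun j => Real.sqrt_nonneg _,
    fun _ _ h => Real.sqrt_le_sqrt (hμ h), by rwa [Matrix.mul_assoc]⟩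

end Matrix

/-- **Existence of the constrained (canonical correlation) SVD.**
Let `P ∈ ℝ^{m×m}` and `R ∈ ℝ^{q×q}` be symmetric positive definite and `C ∈ ℝ^{m×q}`.
Then there exist invertible `Ũ ∈ ℝ^{m×m}`, `Ṽ ∈ ℝ^{q×q}` and a rectangular-diagonal
`S̃ ∈ ℝ^{m×q}` with nonnegative, nonincreasing diagonal entries such that
`ŨᵀPŨ = I_m`, `ṼᵀRṼ = I_q` and `ŨᵀCṼ = S̃`. -/
theorem constrained_svd_exists {m q : ℕ}
    (P : Matrix (Fin m) (Fin m) ℝ) (hP : P.PosDef)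
    (R : Matrix (Fin q) (Fin q) ℝ) (hR : R.PosDef)
    (C : Matrix (Fin m) (Fin q) ℝ) :
    ∃ (U : Matrix (Fin m) (Fin m) ℝ) (V : Matrix (Fin q) (Fin q) ℝ)
      (S : Matrix (Fin m) (Fin q) ℝ),
      IsUnit U ∧ IsUnit V ∧
      (∀ (i : Fin m) (j : Fin q), (i : ℕ) ≠ (j : ℕ) → S i j = 0) ∧
      (∀ (i : Fin m) (j : Fin q), (i : ℕ) = (j : ℕ) → 0 ≤ S i j) ∧
      (∀ (i i' : Fin m) (j j' : Fin q), (i : ℕ) = (j : ℕ) → (i' : ℕ) = (j' : ℕ) →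
        (i : ℕ) ≤ (i' : ℕ) → S i' j' ≤ S i j) ∧
      Uᵀ * P * U = 1 ∧ Vᵀ * R * V = 1 ∧ Uᵀ * C * V = S := by
  obtain ⟨L, hL, hLP⟩ := hP.exists_isUnit_transpose_mul_mul_eq_one
  obtain ⟨M, hM, hMR⟩ := hR.exists_isUnit_transpose_mul_mul_eq_one
  obtain ⟨U, V, s, hU, hV, hs0, hs, hUV⟩ := exists_svd (Lᵀ * C * M)
  refine ⟨L * U, M * V, rectDiagonal s, hL.mul (.of_mul_eq_one_right _ hU),
    hM.mul (.of_mul_eq_one_right _ hV), fun i j hij => by simp [rectDiagonal, hij],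
    fun i j hij => by simpa [rectDiagonal, hij] using hs0 j, ?_, ?_, ?_, ?_⟩
  · intro i i' j j' hij hij' hii'
    simpa [rectDiagonal, hij, hij'] using hs (Fin.le_def.mpr (hij ▸ hij' ▸ hii'))
  · rw [transpose_mul_mul_mul_mul, hLP, Matrix.mul_one, hU]
  · rw [transpose_mul_mul_mul_mul, hMR, Matrix.mul_one, hV]
  · rw [transpose_mul_mul_mul_mul, hUV]
end

section
/- Weighted SVD realization (core of the unified state-realization theorem): Let H ∈ ℝ^{m×q} with rank(H) = n, let W₁ ∈ ℝ^{m×m} and W₂ ∈ ℝ^{q×q} be invertible, and let W₁HW₂ = USVᵀ be a singular value decomposition, i.e., U ∈ ℝ^{m×m} and V ∈ ℝ^{q×q} are orthogonal and S ∈ ℝ^{m×q} is rectangular diagonal with nonnegative nonincreasing diagonal entries. Then S has exactly n positive diagonal entries, and with U_n ∈ ℝ^{m×n} the first n columns of U, V_n ∈ ℝ^{q×n} the first n columns of V, and S_n ∈ ℝ^{n×n} the top-left n×n block of S, one has (W₁⁻¹·U_n·S_n^{1/2})·(S_n^{1/2}·V_nᵀ·W₂⁻¹) = H. -/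
/-!
Multiplication by the invertible matrices `W₁`, `W₂`, `U`, `Vᵀ` preserves rank, so `rank S = n`.
For rectangular diagonal `S`, `S Sᵀ` is the diagonal matrix of the squared diagonal entries of
`S`, so `rank S` counts the nonzero diagonal entries; being nonnegative and nonincreasing, these
are exactly the first `n`. Hence `U S Vᵀ = U_n S_n V_nᵀ`, and `S_n = S_n^{1/2} S_n^{1/2}`.
-/

open Matrix

theorem Fin.mem_iff_lt_card_of_le_imp {m : ℕ} {p : Fin m → Prop} [DecidablePred p]
    (hp : ∀ i j, i ≤ j → p j → p i) (i : Fin m) :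
    p i ↔ (i : ℕ) < Fintype.card {j // p j} := by
  rw [Fintype.card_subtype]
  constructor
  · intro hi
    have hsub : Finset.Iic i ⊆ ({j | p j} : Finset (Fin m)) := fun j hj =>
      Finset.mem_filter.mpr ⟨Finset.mem_univ _, hp j i (Finset.mem_Iic.mp hj) hi⟩
    have := Finset.card_le_card hsub
    rw [Fin.card_Iic] at this
    omega
  · intro hi
    by_contra hni
    have hsub : ({j | p j} : Finset (Fin m)) ⊆ Finset.Iio i := fun j hj =>
      Finset.mem_Iio.mpr (lt_of_not_ge fun hij => hni (hp i j hij (Finset.mem_filter.mp hj).2))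
    have := Finset.card_le_card hsub
    rw [Fin.card_Iio] at this
    omega

theorem Fin.pos_iff_lt_card_ne_zero_of_antitone {R : Type*} [Zero R] [PartialOrder R] {m : ℕ}
    [DecidableEq R] {d : Fin m → R} (hd : Antitone d) (hnn : ∀ i, 0 ≤ d i) (i : Fin m) :
    0 < d i ↔ (i : ℕ) < Fintype.card {j // d j ≠ 0} := by
  rw [(hnn i).lt_iff_ne']
  refine Fin.mem_iff_lt_card_of_le_imp (p := fun j => d j ≠ 0) (fun i j hij hj hi => hj ?_) i
  exact le_antisymm (hi ▸ hd hij) (hnn j)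

namespace Matrix

variable {R : Type*} {m q : ℕ}

def IsRectDiag [Zero R] (S : Matrix (Fin m) (Fin q) R) : Prop :=
  ∀ (i : Fin m) (j : Fin q), (i : ℕ) ≠ j → S i j = 0

/-- The diagonal `i ↦ S i i` of a rectangular matrix, padded with zeros for `i ≥ q`. -/
def rectDiag [Zero R] (S : Matrix (Fin m) (Fin q) R) (i : Fin m) : R :=
  if h : (i : ℕ) < q then S i ⟨i, h⟩ else 0

theorem rectDiag_eq [Zero R] (S : Matrix (Fin m) (Fin q) R) {i : Fin m} {j : Fin q}
    (hij : (i : ℕ) = j) : S.rectDiag i = S i j := by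
  obtain ⟨j, hj⟩ := j
  subst hij
  exact dif_pos hj

theorem IsRectDiag.mul_transpose_self [NonUnitalNonAssocSemiring R] {S : Matrix (Fin m) (Fin q) R}
    (hS : S.IsRectDiag) : S * Sᵀ = diagonal fun i => S.rectDiag i * S.rectDiag i := by
  ext i j
  rw [mul_apply, diagonal_apply]
  split_ifs with hij
  · subst hij
    by_cases hi : (i : ℕ) < q
    · rw [Fintype.sum_eq_single ⟨i, hi⟩ fun l hl => by
        rw [hS i l fun h => hl (Fin.ext h.symm), zero_mul], rectDiag, dif_pos hi]
      rfl
    · rw [rectDiag, dif_neg hi, mul_zero]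
      exact Finset.sum_eq_zero fun l _ => by rw [hS i l (by omega), zero_mul]
  · refine Finset.sum_eq_zero fun l _ => ?_
    by_cases hil : (i : ℕ) = l
    · rw [transpose_apply, hS j l fun h => hij (Fin.ext (hil.trans h.symm)), mul_zero]
    · rw [hS i l hil, zero_mul]

theorem IsRectDiag.rank_eq [Field R] [LinearOrder R] [IsStrictOrderedRing R] [DecidableEq R]
    {S : Matrix (Fin m) (Fin q) R} (hS : S.IsRectDiag) :
    S.rank = Fintype.card {i // S.rectDiag i ≠ 0} := by
  rw [← rank_self_mul_transpose, hS.mul_transpose_self, rank_diagonal]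
  exact Fintype.card_congr (Equiv.subtypeEquivRight fun i => mul_self_ne_zero)

theorem rectDiag_nonneg [Zero R] [Preorder R] {S : Matrix (Fin m) (Fin q) R}
    (hnn : ∀ (i : Fin m) (j : Fin q), (i : ℕ) = j → 0 ≤ S i j) (i : Fin m) :
    0 ≤ S.rectDiag i := by
  unfold rectDiag
  split_ifs
  exacts [hnn _ _ rfl, le_rfl]

theorem rectDiag_antitone [Zero R] [Preorder R] {S : Matrix (Fin m) (Fin q) R}
    (hnn : ∀ (i : Fin m) (j : Fin q), (i : ℕ) = j → 0 ≤ S i j)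
    (hanti : ∀ (i i' : Fin m) (j j' : Fin q), (i : ℕ) = j → (i' : ℕ) = j' →
      (i : ℕ) ≤ i' → S i' j' ≤ S i j) :
    Antitone S.rectDiag := by
  intro i i' hii'
  by_cases hi' : (i' : ℕ) < q
  · have hi : (i : ℕ) < q := lt_of_le_of_lt hii' hi'
    rw [rectDiag, rectDiag, dif_pos hi, dif_pos hi']
    exact hanti _ _ _ _ rfl rfl hii'
  · rw [rectDiag, dif_neg hi']
    exact rectDiag_nonneg hnn i

theorem IsRectDiag.pos_iff_lt_rank [Field R] [LinearOrder R] [IsStrictOrderedRing R]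
    {S : Matrix (Fin m) (Fin q) R} (hS : S.IsRectDiag)
    (hnn : ∀ (i : Fin m) (j : Fin q), (i : ℕ) = j → 0 ≤ S i j)
    (hanti : ∀ (i i' : Fin m) (j j' : Fin q), (i : ℕ) = j → (i' : ℕ) = j' →
      (i : ℕ) ≤ i' → S i' j' ≤ S i j) {i : Fin m} {j : Fin q} (hij : (i : ℕ) = j) :
    0 < S i j ↔ (i : ℕ) < S.rank := by
  classical
  rw [← rectDiag_eq S hij, hS.rank_eq]
  exact Fin.pos_iff_lt_card_ne_zero_of_antitone (rectDiag_antitone hnn hanti)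
    (rectDiag_nonneg hnn) i

theorem rank_mul_mul_of_isUnit_det {k l : Type*} [Fintype k] [Fintype l] [DecidableEq k]
    [DecidableEq l] [CommRing R] {A : Matrix k k R} {B : Matrix l l R} (hA : IsUnit A.det)
    (hB : IsUnit B.det) (M : Matrix k l R) : (A * M * B).rank = M.rank := by
  rw [rank_mul_eq_left_of_isUnit_det B _ hB, rank_mul_eq_right_of_isUnit_det A M hA]

theorem mul_mul_eq_submatrix_mul_diagonal_mul {ι k l M N : Type*} [Fintype ι] [Fintype M]
    [Fintype N] [DecidableEq ι] [Semiring R] (U : Matrix k M R) (S : Matrix M N R)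
    (V : Matrix N l R) {e₁ : ι → M} {e₂ : ι → N} (he₁ : Function.Injective e₁)
    (hS : ∀ i j, S i j ≠ 0 → ∃ a, e₁ a = i ∧ e₂ a = j) :
    U * S * V = U.submatrix id e₁ * diagonal (fun a => S (e₁ a) (e₂ a)) * V.submatrix e₂ id := by
  ext x y
  have hL : (U * S * V) x y = ∑ p : M × N, U x p.1 * S p.1 p.2 * V p.2 y := by
    simp only [mul_apply, Finset.sum_mul, Fintype.sum_prod_type]
    exact Finset.sum_comm
  rw [hL, mul_apply]
  simp only [mul_diagonal, submatrix_apply, id]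
  refine (Fintype.sum_of_injective (fun a => (e₁ a, e₂ a))
    (fun a b h => he₁ (congrArg Prod.fst h)) _ _ ?_ fun _ => rfl).symm
  rintro ⟨i, j⟩ hij
  by_contra h
  obtain ⟨a, rfl, rfl⟩ := hS i j fun h0 => h (by simp [h0])
  exact hij ⟨a, rfl⟩

theorem IsDiag.map_sqrt_mul_self {ι : Type*} [Fintype ι] [DecidableEq ι] {A : Matrix ι ι ℝ}
    (hA : A.IsDiag) (hnn : ∀ i, 0 ≤ A i i) : A.map Real.sqrt * A.map Real.sqrt = A := by
  rw [← (hA.map Real.sqrt_zero).diagonal_diag, diagonal_mul_diagonal]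
  conv_rhs => rw [← hA.diagonal_diag]
  congr 1
  funext i
  exact Real.mul_self_sqrt (hnn i)

end Matrix

/-- **Weighted SVD realization (core of the unified state-realization theorem).**
Let `H ∈ ℝ^{m×q}` with `rank(H) = n`, let `W₁, W₂` be invertible, and let
`W₁HW₂ = USVᵀ` be a singular value decomposition (`U`, `V` orthogonal, `S`
rectangular diagonal with nonnegative nonincreasing diagonal entries).  Then `S` has
exactly `n` positive diagonal entries, and with `U_n` the first `n` columns of `U`,
`V_n` the first `n` columns of `V` and `S_n` the top-left `n×n` block of `S`, one has
`(W₁⁻¹·U_n·S_n^{1/2})·(S_n^{1/2}·V_nᵀ·W₂⁻¹) = H`, where `S_n^{1/2}` is the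
entrywise-square-root (diagonal) matrix. -/
theorem weighted_svd_realization {m q n : ℕ} (hnm : n ≤ m) (hnq : n ≤ q)
    (H : Matrix (Fin m) (Fin q) ℝ) (hrank : H.rank = n)
    (W₁ : Matrix (Fin m) (Fin m) ℝ) (W₂ : Matrix (Fin q) (Fin q) ℝ)
    (hW₁ : IsUnit W₁) (hW₂ : IsUnit W₂)
    (U : Matrix (Fin m) (Fin m) ℝ) (V : Matrix (Fin q) (Fin q) ℝ)
    (S : Matrix (Fin m) (Fin q) ℝ)
    (hU : Uᵀ * U = 1) (hV : Vᵀ * V = 1)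
    (hSdiag : ∀ (i : Fin m) (j : Fin q), (i : ℕ) ≠ (j : ℕ) → S i j = 0)
    (hSnn : ∀ (i : Fin m) (j : Fin q), (i : ℕ) = (j : ℕ) → 0 ≤ S i j)
    (hSanti : ∀ (i i' : Fin m) (j j' : Fin q), (i : ℕ) = (j : ℕ) → (i' : ℕ) = (j' : ℕ) →
      (i : ℕ) ≤ (i' : ℕ) → S i' j' ≤ S i j)
    (hSVD : W₁ * H * W₂ = U * S * Vᵀ) :
    (∀ (i : Fin m) (j : Fin q), (i : ℕ) = (j : ℕ) → (0 < S i j ↔ (i : ℕ) < n)) ∧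
    (W₁⁻¹ * U.submatrix id (Fin.castLE hnm)
        * Matrix.of (fun a b : Fin n => Real.sqrt (S (Fin.castLE hnm a) (Fin.castLE hnq b))))
      * (Matrix.of (fun a b : Fin n => Real.sqrt (S (Fin.castLE hnm a) (Fin.castLE hnq b)))
        * (V.submatrix id (Fin.castLE hnq))ᵀ * W₂⁻¹) = H := by
  have hW₁d := (isUnit_iff_isUnit_det W₁).1 hW₁
  have hW₂d := (isUnit_iff_isUnit_det W₂).1 hW₂
  have hSrank : S.rank = n := by
    rw [← hrank, ← rank_mul_mul_of_isUnit_det hW₁d hW₂d H, hSVD,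
      rank_mul_mul_of_isUnit_det (isUnit_det_of_left_inverse hU)
        (by rw [det_transpose]; exact isUnit_det_of_left_inverse hV)]
  have hpos : ∀ (i : Fin m) (j : Fin q), (i : ℕ) = j → (0 < S i j ↔ (i : ℕ) < n) :=
    fun i j hij => hSrank ▸ IsRectDiag.pos_iff_lt_rank hSdiag hSnn hSanti hij
  refine ⟨hpos, ?_⟩
  have hsupp : ∀ k l, S k l ≠ 0 → ∃ a : Fin n, Fin.castLE hnm a = k ∧ Fin.castLE hnq a = l := by
    intro k l hkl
    have hkl' : (k : ℕ) = l := by_contra fun h => hkl (hSdiag k l h)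
    have hkn := (hpos k l hkl').1 ((hSnn k l hkl').lt_of_ne' hkl)
    exact ⟨⟨k, hkn⟩, rfl, Fin.ext hkl'⟩
  set Sₙ := S.submatrix (Fin.castLE hnm) (Fin.castLE hnq)
  have hSₙ : Sₙ.IsDiag := fun a b hab => hSdiag _ _ fun h => hab (Fin.ext h)
  have hsqrt : Sₙ.map Real.sqrt * Sₙ.map Real.sqrt =
      diagonal fun a => S (Fin.castLE hnm a) (Fin.castLE hnq a) := by
    rw [hSₙ.map_sqrt_mul_self fun a => hSnn _ _ rfl, ← hSₙ.diagonal_diag]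
    rfl
  calc _ = W₁⁻¹ * (U.submatrix id (Fin.castLE hnm) * (Sₙ.map Real.sqrt * Sₙ.map Real.sqrt)
          * Vᵀ.submatrix (Fin.castLE hnq) id) * W₂⁻¹ := by
        simp only [Matrix.mul_assoc, transpose_submatrix]
        rfl
    _ = W₁⁻¹ * (W₁ * H * W₂) * W₂⁻¹ := by
      rw [hsqrt, ← mul_mul_eq_submatrix_mul_diagonal_mul _ _ _ (Fin.castLE_injective hnm) hsupp,
        hSVD]
    _ = H := by
      rw [Matrix.mul_assoc W₁, nonsing_inv_mul_cancel_left _ _ hW₁d,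
        mul_nonsing_inv_cancel_right _ _ hW₂d]
end

section
/- Kronecker factorization of the parameter-varying observability product: Let P be a set, let ψ⁰, …, ψ^{n_ψ} : P → ℝ, and for p ∈ P write ψ(p) = [ψ⁰(p), …, ψ^{n_ψ}(p)] ∈ ℝ^{1×(1+n_ψ)}. Let A(p) = ∑_{i=0}^{n_ψ} A_i ψ^i(p) with A_i ∈ ℝ^{n×n} and C(p) = ∑_{i=0}^{n_ψ} C_i ψ^i(p) with C_i ∈ ℝ^{m×n}. Define recursively 𝙾₁ = [C₀ᵀ, …, C_{n_ψ}ᵀ]ᵀ ∈ ℝ^{m(1+n_ψ)×n} and 𝙾_k = [(𝙾_{k−1}A₀)ᵀ, …, (𝙾_{k−1}A_{n_ψ})ᵀ]ᵀ for k ≥ 2. Then for every k ≥ 1 and every sequence p₀, p₁, …, p_{k−1} ∈ P, C(p_{k−1})·A(p_{k−2})·⋯·A(p₀) = (ψ(p₀) ⊗ ψ(p₁) ⊗ ⋯ ⊗ ψ(p_{k−1}) ⊗ I_m)·𝙾_k. -/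
open Matrix

/-- Index type of the `k`-fold Kronecker product
`ψ(p₀) ⊗ ψ(p₁) ⊗ ⋯ ⊗ ψ(p_{k−1}) ⊗ I_m` (column index), which is also the row index
type of the stacked observability matrix `𝙾_k`: `KronIdx m nψ 0 = Fin m` and
`KronIdx m nψ (k+1) = Fin (nψ+1) × KronIdx m nψ k`. -/
def KronIdx (m nψ : ℕ) : ℕ → Type
  | 0 => Fin m
  | k + 1 => Fin (nψ + 1) × KronIdx m nψ k

instance instFintypeKronIdx (m nψ : ℕ) : ∀ k, Fintype (KronIdx m nψ k)
  | 0 => inferInstanceAs (Fintype (Fin m))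
  | k + 1 =>
    letI := instFintypeKronIdx m nψ k
    inferInstanceAs (Fintype (Fin (nψ + 1) × KronIdx m nψ k))

/-- The row-selector Kronecker product
`ψ(p₀) ⊗ ψ(p₁) ⊗ ⋯ ⊗ ψ(p_k) ⊗ I_m ∈ ℝ^{m × m(1+nψ)^{k+1}}`, where
`ψ(p) = [ψ⁰(p), …, ψ^{nψ}(p)]` is a row vector. -/
noncomputable def kronRow {P : Type*} {m nψ : ℕ} (ψ : P → Fin (nψ + 1) → ℝ) :
    (k : ℕ) → (Fin (k + 1) → P) → Matrix (Fin m) (KronIdx m nψ (k + 1)) ℝ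
  | 0, ps => Matrix.of fun (i : Fin m) (jc : Fin (nψ + 1) × Fin m) =>
      ψ (ps 0) jc.1 * (if i = jc.2 then (1 : ℝ) else 0)
  | k + 1, ps => Matrix.of fun (i : Fin m) (jc : Fin (nψ + 1) × KronIdx m nψ (k + 1)) =>
      ψ (ps 0) jc.1 * kronRow ψ k (fun l => ps l.succ) i jc.2

/-- The stacked extended observability matrices:
`obsMat Cmat Amat 0 = 𝙾₁ = [C₀ᵀ, …, C_{nψ}ᵀ]ᵀ` and
`obsMat Cmat Amat k = 𝙾_{k+1} = [(𝙾_k A₀)ᵀ, …, (𝙾_k A_{nψ})ᵀ]ᵀ`. -/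
noncomputable def obsMat {m n nψ : ℕ}
    (Cmat : Fin (nψ + 1) → Matrix (Fin m) (Fin n) ℝ)
    (Amat : Fin (nψ + 1) → Matrix (Fin n) (Fin n) ℝ) :
    (k : ℕ) → Matrix (KronIdx m nψ (k + 1)) (Fin n) ℝ
  | 0 => Matrix.of fun (rc : Fin (nψ + 1) × Fin m) c => Cmat rc.1 rc.2 c
  | k + 1 => Matrix.of fun (rc : Fin (nψ + 1) × KronIdx m nψ (k + 1)) c =>
      (obsMat Cmat Amat k * Amat rc.1) rc.2 c

/-- The product `C(p_k)·A(p_{k−1})·⋯·A(p₀)`; for `k = 0` it reduces to `C(p₀)`. -/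
noncomputable def prodCA {P : Type*} {m n : ℕ}
    (Cfun : P → Matrix (Fin m) (Fin n) ℝ) (Afun : P → Matrix (Fin n) (Fin n) ℝ) :
    (k : ℕ) → (Fin (k + 1) → P) → Matrix (Fin m) (Fin n) ℝ
  | 0, ps => Cfun (ps 0)
  | k + 1, ps => prodCA Cfun Afun k (fun l => ps l.succ) * Afun (ps 0)

/-! Induction on `k`. A row `w ⊗ R` multiplied by the block column `[M₀; …; M_N]` equals
`∑ⱼ wⱼ R Mⱼ`. With `R = I_m` and `Mⱼ = Cⱼ` this gives `C(p₀)`; with `R` the Kronecker row of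
`p₁, …, p_k` and `Mⱼ = 𝙾_k Aⱼ` it gives `(R 𝙾_k) A(p₀)`, and `R 𝙾_k` is the product for the
shifted sequence by induction. -/

theorem Matrix.of_mul_prod_mul_of_prod_eq_sum {α l J κ n : Type*} [Semiring α] [Fintype J]
    [Fintype κ] (w : J → α) (R : Matrix l κ α) (M : J → Matrix κ n α) :
    (of fun i (jr : J × κ) => w jr.1 * R i jr.2) * (of fun (jr : J × κ) c => M jr.1 jr.2 c)
      = ∑ j, w j • (R * M j) := by
  ext i c
  simp only [mul_apply, of_apply, Fintype.sum_prod_type, sum_apply, smul_apply, smul_eq_mul,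
    Finset.mul_sum, mul_assoc]

section

variable {P : Type*} {m n nψ : ℕ} (ψ : P → Fin (nψ + 1) → ℝ)
  (Amat : Fin (nψ + 1) → Matrix (Fin n) (Fin n) ℝ) (Cmat : Fin (nψ + 1) → Matrix (Fin m) (Fin n) ℝ)

/- These products elaborate, as in the theorem, with the `CStarMatrix` multiplication instance,
which is only definitionally equal to `Matrix`'s; the closing `rfl`s bridge it and unfold
`kronRow`/`obsMat`. -/

theorem kronRow_zero_mul_obsMat_zero (ps : Fin 1 → P) :
    (kronRow ψ 0 ps * obsMat Cmat Amat 0 : Matrix (Fin m) (Fin n) ℝ)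
      = ∑ j, ψ (ps 0) j • Cmat j := by
  have h := Matrix.of_mul_prod_mul_of_prod_eq_sum (ψ (ps 0)) (1 : Matrix (Fin m) (Fin m) ℝ) Cmat
  simp only [Matrix.one_mul] at h
  rw [← h]
  rfl

theorem kronRow_succ_mul_obsMat_succ (k : ℕ) (ps : Fin (k + 2) → P) :
    (kronRow ψ (k + 1) ps * obsMat Cmat Amat (k + 1) : Matrix (Fin m) (Fin n) ℝ)
      = (kronRow ψ k (fun l => ps l.succ) * obsMat Cmat Amat k : Matrix (Fin m) (Fin n) ℝ)
        * ∑ j, ψ (ps 0) j • Amat j := by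
  rw [Matrix.mul_sum]
  refine (Matrix.of_mul_prod_mul_of_prod_eq_sum (ψ (ps 0)) (kronRow ψ k fun l => ps l.succ)
    fun j => obsMat Cmat Amat k * Amat j).trans ?_
  simp_rw [Matrix.mul_smul, ← Matrix.mul_assoc]
  rfl

end

/-- **Kronecker factorization of the parameter-varying observability product.**
With `A(p) = ∑_{i} A_i ψ^i(p)` and `C(p) = ∑_{i} C_i ψ^i(p)`, for every `k ≥ 1` and
scheduling points `p₀, …, p_{k−1}` one has
`C(p_{k−1})·A(p_{k−2})·⋯·A(p₀) = (ψ(p₀) ⊗ ψ(p₁) ⊗ ⋯ ⊗ ψ(p_{k−1}) ⊗ I_m)·𝙾_k`. -/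
theorem kronecker_observability_factorization {P : Type*} {m n nψ : ℕ}
    (ψ : P → Fin (nψ + 1) → ℝ)
    (Amat : Fin (nψ + 1) → Matrix (Fin n) (Fin n) ℝ)
    (Cmat : Fin (nψ + 1) → Matrix (Fin m) (Fin n) ℝ)
    (k : ℕ) (ps : Fin (k + 1) → P) :
    prodCA (fun p => ∑ i, ψ p i • Cmat i) (fun p => ∑ i, ψ p i • Amat i) k ps
      = kronRow ψ k ps * obsMat Cmat Amat k := by
  induction k with
  | zero => exact (kronRow_zero_mul_obsMat_zero ψ Amat Cmat ps).symm
  | succ k ih => rw [kronRow_succ_mul_obsMat_succ, ← ih]; rfl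
end
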